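/- Let S ⊆ R be a Frobenius extension of k-algebras with R a finite free S-module, S contained in the centre of R, and Frobenius form Φ: R → S. Then there exists a k-algebra automorphism ν of R (the Nakayama automorphism) such that Φ(qr) = Φ(ν(r)q) for all q, r ∈ R. -/

import Mathlib

/-!
Nondegeneracy of `Φ` on both sides makes `R` embed into `Hom_S(R,S)` both as `r ↦ Φ(r·-)` and
as `r ↦ Φ(-·r)`; the Frobenius condition says the first embedding is onto, so `Φ(-·r) = Φ(ν r·-)`
defines `ν`, and right nondegeneracy makes it a ring endomorphism, injective by left
nondegeneracy. For surjectivity one needs the second embedding to be onto as well: a basis `bᵢ`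
of `R` over `S` and its dual basis `yᵢ` with respect to `Φ` (`Φ(yᵢ q)` is the `i`-th coordinate
of `q`) satisfy also `r = ∑ Φ(r bᵢ) yᵢ`, because `S` is central and hence commutative, and then
every `f` is `Φ(-·∑ f(yᵢ) bᵢ)`.
-/

/-- `Φ : R → S` is a Frobenius form for the extension `S ⊆ R`:
(F1) its kernel contains no nonzero left ideal and no nonzero right ideal of `R`, and
(F2) the assignment `r ↦ (q ↦ Φ(rq))` is surjective onto `Hom_S(R,S)`. -/
def IsFrobeniusForm {k R : Type*} [Field k] [Ring R] [Algebra k R]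
    (S : Subalgebra k R) (Φ : R →ₗ[S] S) : Prop :=
  (∀ I : Ideal R, (∀ x ∈ I, Φ x = 0) → I = ⊥) ∧
  (∀ I : Submodule Rᵐᵒᵖ R, (∀ x ∈ I, Φ x = 0) → I = ⊥) ∧
  (∀ f : R →ₗ[S] S, ∃ r : R, ∀ q : R, f q = Φ (r * q))

section Central

variable {k R : Type*} [CommSemiring k] [Semiring R] [Algebra k R] {S : Subalgebra k R}

theorem Subalgebra.mul_comm_of_subset_center (hcentral : (S : Set R) ⊆ Set.center R)
    (s t : S) : s * t = t * s :=
  Subtype.ext ((hcentral s.2).comm t)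

variable (Φ : R →ₗ[S] S)

theorem LinearMap.map_mul_smul (hcentral : (S : Set R) ⊆ Set.center R) (s : S) (q r : R) :
    Φ (q * (s • r)) = s * Φ (q * r) := by
  rw [Subalgebra.smul_def, smul_eq_mul, ← mul_assoc, ← (hcentral s.2).comm q, mul_assoc,
    ← smul_eq_mul, ← Subalgebra.smul_def, map_smul, smul_eq_mul]

theorem LinearMap.map_mul_sum_smul (hcentral : (S : Set R) ⊆ Set.center R) {ι : Type*}
    [Fintype ι] (c : ι → S) (x : ι → R) (q : R) :
    Φ (q * ∑ i, c i • x i) = ∑ i, c i * Φ (q * x i) := by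
  simp only [Finset.mul_sum, map_sum, Φ.map_mul_smul hcentral]

theorem LinearMap.map_sum_smul_mul {ι : Type*} [Fintype ι] (c : ι → S) (x : ι → R) (q : R) :
    Φ ((∑ i, c i • x i) * q) = ∑ i, c i * Φ (x i * q) := by
  simp only [Finset.sum_mul, smul_mul_assoc, map_sum, map_smul, smul_eq_mul]

end Central

namespace IsFrobeniusForm

variable {k R : Type*} [Field k] [Ring R] [Algebra k R] {S : Subalgebra k R} {Φ : R →ₗ[S] S}
  (hΦ : IsFrobeniusForm S Φ)
include hΦ

theorem eq_of_forall_map_mul_left {a b : R} (h : ∀ q, Φ (q * a) = Φ (q * b)) : a = b := by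
  have hspan : Ideal.span {a - b} = ⊥ := hΦ.1 _ fun x hx => by
    obtain ⟨q, rfl⟩ := Ideal.mem_span_singleton'.mp hx
    rw [mul_sub, map_sub, h, sub_self]
  simpa [sub_eq_zero] using hspan

theorem eq_of_forall_map_mul_right {a b : R} (h : ∀ q, Φ (a * q) = Φ (b * q)) : a = b := by
  have hspan : Submodule.span Rᵐᵒᵖ {a - b} = ⊥ := hΦ.2.1 _ fun x hx => by
    obtain ⟨q, rfl⟩ := Submodule.mem_span_singleton.mp hx
    rw [MulOpposite.smul_eq_mul_unop, sub_mul, map_sub, h, sub_self]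
  simpa [sub_eq_zero] using hspan

theorem exists_nakayama : ∃ ν : R → R, ∀ q r, Φ (q * r) = Φ (ν r * q) := by
  choose ν hν using fun r => hΦ.2.2 (Φ ∘ₗ LinearMap.mulRight S r)
  exact ⟨ν, fun q r => hν r q⟩

section Nakayama

variable {ν : R → R} (hν : ∀ q r, Φ (q * r) = Φ (ν r * q))
include hν

theorem nakayama_one : ν 1 = 1 :=
  hΦ.eq_of_forall_map_mul_right fun q => by rw [← hν, mul_one, one_mul]

theorem nakayama_mul (a b : R) : ν (a * b) = ν a * ν b :=
  hΦ.eq_of_forall_map_mul_right fun q => by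
    rw [← hν, ← mul_assoc, hν (q * a), ← mul_assoc, hν _ a, ← mul_assoc]

theorem nakayama_add (a b : R) : ν (a + b) = ν a + ν b :=
  hΦ.eq_of_forall_map_mul_right fun q => by
    rw [← hν, add_mul, map_add, ← hν, ← hν, mul_add, map_add]

theorem nakayama_algebraMap (c : k) : ν (algebraMap k R c) = algebraMap k R c :=
  hΦ.eq_of_forall_map_mul_right fun q => by rw [← hν, Algebra.commutes]

theorem nakayama_injective : Function.Injective ν := fun a b hab =>
  hΦ.eq_of_forall_map_mul_left fun q => by rw [hν, hν q b, hab]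

end Nakayama

variable (hcentral : (S : Set R) ⊆ Set.center R)
include hcentral

theorem sum_map_mul_smul_dualBasis {ι : Type*} [Fintype ι] (b : Module.Basis ι S R) {y : ι → R}
    (hy : ∀ i q, b.coord i q = Φ (y i * q)) (r : R) : ∑ i, Φ (r * b i) • y i = r := by
  refine hΦ.eq_of_forall_map_mul_right fun q => ?_
  have hq : ∑ i, Φ (y i * q) • b i = q := by
    simpa only [← hy, Module.Basis.coord_apply] using b.sum_repr q
  conv_rhs => rw [← hq]
  rw [Φ.map_sum_smul_mul, Φ.map_mul_sum_smul hcentral]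
  exact Finset.sum_congr rfl fun i _ => Subalgebra.mul_comm_of_subset_center hcentral _ _

theorem exists_map_mul_right_eq [Module.Free S R] [Module.Finite S R] (f : R →ₗ[S] S) :
    ∃ n, ∀ q, f q = Φ (q * n) := by
  let b := Module.Free.chooseBasis S R
  choose y hy using fun i => hΦ.2.2 (b.coord i)
  refine ⟨∑ i, f (y i) • b i, fun q => ?_⟩
  conv_lhs => rw [← hΦ.sum_map_mul_smul_dualBasis hcentral b hy q]
  simp only [map_sum, map_smul, smul_eq_mul, Φ.map_mul_sum_smul hcentral]
  exact Finset.sum_congr rfl fun i _ => Subalgebra.mul_comm_of_subset_center hcentral _ _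

theorem nakayama_surjective [Module.Free S R] [Module.Finite S R] {ν : R → R}
    (hν : ∀ q r, Φ (q * r) = Φ (ν r * q)) : Function.Surjective ν := fun r => by
  let leftMul : R →ₗ[S] S :=
    { toFun := fun q => Φ (r * q)
      map_add' := fun p q => by rw [mul_add, map_add]
      map_smul' := fun s q => Φ.map_mul_smul hcentral s r q }
  obtain ⟨m, hm⟩ := hΦ.exists_map_mul_right_eq hcentral leftMul
  exact ⟨m, hΦ.eq_of_forall_map_mul_right fun q => (hν q m).symm.trans (hm q).symm⟩

end IsFrobeniusForm

/-- **Nakayama automorphism.** If `S ⊆ R` is a free Frobenius extension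
with `S` central in `R` and Frobenius form `Φ`, then there is a `k`-algebra
automorphism `ν : R ≃ₐ[k] R` with `Φ(qr) = Φ(ν(r)q)` for all `q, r ∈ R`. -/
theorem exists_nakayama_automorphism
    {k R : Type*} [Field k] [Ring R] [Algebra k R] (S : Subalgebra k R)
    (hcentral : (S : Set R) ⊆ Set.center R)
    (hfin : Module.Finite S R) (hfree : Module.Free S R)
    (Φ : R →ₗ[S] S) (hΦ : IsFrobeniusForm S Φ) :
    ∃ ν : R ≃ₐ[k] R, ∀ q r : R, Φ (q * r) = Φ (ν r * q) := by
  obtain ⟨ν, hν⟩ := hΦ.exists_nakayama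
  let νRing : R →+* R :=
    RingHom.mk' ⟨⟨ν, hΦ.nakayama_one hν⟩, hΦ.nakayama_mul hν⟩ (hΦ.nakayama_add hν)
  let νAlg : R →ₐ[k] R := ⟨νRing, hΦ.nakayama_algebraMap hν⟩
  have hbij : Function.Bijective νAlg :=
    ⟨hΦ.nakayama_injective hν, hΦ.nakayama_surjective hcentral hν⟩
  exact ⟨AlgEquiv.ofBijective νAlg hbij, hν⟩
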